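/- arXiv:2307.06220 — 3 statements merged into one kernel-verified Lean document; each statement's English description precedes it below -/
import Mathlib

section
/- Let d be an (⊙,∨)-derivation on the standard MV-algebra I = [0,1]. Then for every x ∈ I and every positive integer m, (d(x))^{⊙m} ≤ d(x^{⊙m}), where x^{⊙k} denotes the k-fold ⊙-power x ⊙ x ⊙ ⋯ ⊙ x. -/
/-- Łukasiewicz strong conjunction `x ⊙ y = max 0 (x + y - 1)` on the unit interval. -/
noncomputable def od (x y : unitInterval) : unitInterval :=
  ⟨max 0 (x.1 + y.1 - 1),
    ⟨le_max_left _ _, max_le zero_le_one (by have := x.2.2; have := y.2.2; linarith)⟩⟩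

/-- Łukasiewicz strong disjunction `x ⊕ y = min 1 (x + y)` on the unit interval. -/
noncomputable def op (x y : unitInterval) : unitInterval :=
  ⟨min 1 (x.1 + y.1),
    ⟨le_min zero_le_one (by have := x.2.1; have := y.2.1; linarith), min_le_left _ _⟩⟩

/-- `d` is an `(⊙,∨)`-derivation on the standard MV-algebra `[0,1]`:
`d (x ⊙ y) = (d x ⊙ y) ∨ (x ⊙ d y)` for all `x, y`. -/
def IsOdotDer (d : unitInterval → unitInterval) : Prop :=
  ∀ x y : unitInterval, d (od x y) = max (od (d x) y) (od x (d y))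

/-- k-fold ⊙-power, with x^{⊙0} = 1. -/
noncomputable def opow (x : unitInterval) : ℕ → unitInterval
  | 0 => 1
  | k + 1 => od (opow x k) x

lemma od_coe (x y : unitInterval) : (od x y : ℝ) = max 0 (x.1 + y.1 - 1) := rfl

lemma od_mono {a b a' b' : unitInterval} (ha : a ≤ a') (hb : b ≤ b') :
    od a b ≤ od a' b' := by
  show (max 0 (a.1 + b.1 - 1) : ℝ) ≤ max 0 (a'.1 + b'.1 - 1)
  have ha' : (a : ℝ) ≤ a' := ha
  have hb' : (b : ℝ) ≤ b' := hb
  apply max_le_max le_rfl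
  linarith

lemma od_zero_right (a : unitInterval) : od a 0 = 0 := by
  apply Subtype.ext
  show (max 0 (a.1 + (0:unitInterval).1 - 1) : ℝ) = 0
  have := a.2.2
  simp only [Set.Icc.coe_zero]
  rw [max_eq_left (by linarith)]

lemma od_zero_left (a : unitInterval) : od 0 a = 0 := by
  apply Subtype.ext
  show (max 0 ((0:unitInterval).1 + a.1 - 1) : ℝ) = 0
  have := a.2.2
  simp only [Set.Icc.coe_zero]
  rw [max_eq_left (by linarith)]

lemma od_one_left (a : unitInterval) : od 1 a = a := by
  apply Subtype.ext
  show (max 0 ((1:unitInterval).1 + a.1 - 1) : ℝ) = a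
  have := a.2.1
  simp only [Set.Icc.coe_one]
  rw [show (1:ℝ) + a.1 - 1 = a.1 by ring, max_eq_right this]

lemma der_zero {d : unitInterval → unitInterval} (hd : IsOdotDer d) : d 0 = 0 := by
  have h := hd 0 0
  rw [od_zero_left, od_zero_right, od_zero_left] at h
  simpa using h

lemma der_le {d : unitInterval → unitInterval} (hd : IsOdotDer d) (x : unitInterval) :
    d x ≤ x := by
  have hx0 : od x (unitInterval.symm x) = 0 := by
    apply Subtype.ext
    show (max 0 (x.1 + (unitInterval.symm x).1 - 1) : ℝ) = 0
    rw [unitInterval.coe_symm_eq]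
    rw [max_eq_left (by linarith)]
  have h := hd x (unitInterval.symm x)
  rw [hx0, der_zero hd] at h
  have h1 : od (d x) (unitInterval.symm x) ≤ 0 := by
    rw [h]; exact le_max_left _ _
  have h2 : (max 0 ((d x).1 + (unitInterval.symm x).1 - 1) : ℝ) ≤ 0 := h1
  rw [unitInterval.coe_symm_eq] at h2
  have h3 : (d x : ℝ) + (1 - x.1) - 1 ≤ 0 := le_trans (le_max_right _ _) h2
  show (d x : ℝ) ≤ x
  linarith

/-- (d x)^{⊙m} ≤ d (x^{⊙m}) for every positive m. -/
theorem stmt4 (d : unitInterval → unitInterval) (hd : IsOdotDer d) :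
    ∀ x : unitInterval, ∀ m : ℕ, 0 < m → opow (d x) m ≤ d (opow x m) := by
  intro x m hm
  induction m with
  | zero => exact absurd hm (by simp)
  | succ n ih =>
    rcases Nat.eq_zero_or_pos n with hn | hn
    · subst hn
      show opow (d x) 1 ≤ d (opow x 1)
      have e1 : opow (d x) 1 = d x := by
        show od (opow (d x) 0) (d x) = d x
        show od 1 (d x) = d x
        exact od_one_left _
      have e2 : opow x 1 = x := by
        show od (opow x 0) x = x
        show od 1 x = x
        exact od_one_left _
      rw [e1, e2]
    · have ihn := ih hn
      show od (opow (d x) n) (d x) ≤ d (od (opow x n) x)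
      rw [hd (opow x n) x]
      calc od (opow (d x) n) (d x) ≤ od (d (opow x n)) x :=
            od_mono ihn (der_le hd x)
        _ ≤ max (od (d (opow x n)) x) (od (opow x n) (d x)) := le_max_left _ _
end

section
/- Let d be an (⊙,∨)-derivation on the standard MV-algebra I = [0,1]. If x, y ∈ I satisfy y ≤ x and d(x) = x, then d(y) = y. -/
lemma od_val (x y : unitInterval) : (od x y).1 = max 0 (x.1 + y.1 - 1) := rfl

lemma d_zero (d : unitInterval → unitInterval) (hd : IsOdotDer d) : d 0 = 0 := by
  have h := hd 0 0
  have h00 : od (0 : unitInterval) 0 = 0 := by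
    apply Subtype.ext
    simp [od_val]
  rw [h00] at h
  have h1 : od (d 0) 0 = 0 := by
    apply Subtype.ext
    have := (d 0).2.2
    simp only [od_val]
    simp only [Set.Icc.coe_zero, add_zero]
    rw [max_eq_left (by linarith)]
  have h2 : od 0 (d 0) = 0 := by
    apply Subtype.ext
    have := (d 0).2.2
    simp only [od_val]
    simp only [Set.Icc.coe_zero, zero_add]
    rw [max_eq_left (by linarith)]
  rw [h1, h2] at h
  simpa using h

lemma d_le (d : unitInterval → unitInterval) (hd : IsOdotDer d) (a : unitInterval) :
    (d a).1 ≤ a.1 := by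
  set a' : unitInterval := ⟨1 - a.1, by constructor <;> [linarith [a.2.2]; linarith [a.2.1]]⟩
  have h := hd a a'
  have haa : od a a' = 0 := by
    apply Subtype.ext
    simp [od_val, a']
  rw [haa, d_zero d hd] at h
  have h1 : od (d a) a' ≤ (0 : unitInterval) := by
    rw [h]; exact le_max_left _ _
  have h1' : (od (d a) a').1 ≤ 0 := h1
  rw [od_val] at h1'
  have := le_max_right (0 : ℝ) ((d a).1 + a'.1 - 1)
  have ha' : a'.1 = 1 - a.1 := rfl
  nlinarith [le_max_right (0 : ℝ) ((d a).1 + a'.1 - 1)]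

/-- if y ≤ x and d x = x then d y = y. -/
theorem stmt5 (d : unitInterval → unitInterval) (hd : IsOdotDer d)
    (x y : unitInterval) (hyx : y ≤ x) (hx : d x = x) : d y = y := by
  have hyx' : y.1 ≤ x.1 := hyx
  set z : unitInterval := ⟨1 - x.1 + y.1, by
    constructor
    · linarith [x.2.2, y.2.1]
    · linarith⟩
  have hxz : od x z = y := by
    apply Subtype.ext
    rw [od_val]
    show max 0 (x.1 + (1 - x.1 + y.1) - 1) = y.1
    rw [max_eq_right (by linarith [y.2.1])]
    ring
  have h := hd x z
  rw [hxz, hx] at h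
  rw [h]
  have h2 : od x (d z) ≤ y := by
    show (od x (d z)).1 ≤ y.1
    rw [od_val]
    have := d_le d hd z
    have hz : z.1 = 1 - x.1 + y.1 := rfl
    exact max_le y.2.1 (by linarith)
  rw [max_eq_left (le_trans h2 (hxz ▸ le_refl _))]
  exact hxz
end

section
/- For every u ∈ I = [0,1], the map χ^(u) : I → I defined by χ^(u)(x) = u if x = 1 and χ^(u)(x) = x otherwise, is an (⊙,∨)-derivation on the standard MV-algebra I. -/
lemma od_one (x : unitInterval) : od x 1 = x := by
  apply Subtype.ext
  simp only [od, Set.Icc.coe_one]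
  have := x.2.1
  rw [max_eq_right] <;> [ring; linarith]

lemma one_od (x : unitInterval) : od 1 x = x := by
  apply Subtype.ext
  simp only [od, Set.Icc.coe_one]
  have := x.2.1
  rw [max_eq_right] <;> [ring; linarith]

lemma od_le_right (x y : unitInterval) : od x y ≤ y :=
  max_le y.2.1 (by have := x.2.2; linarith)

lemma od_le_left (x y : unitInterval) : od x y ≤ x :=
  max_le x.2.1 (by have := y.2.2; linarith)

/-- for every u ∈ [0,1], the map χ⁽ᵘ⁾ sending 1 to u and every
other x to x is an (⊙,∨)-derivation. -/
theorem stmt11 (u : unitInterval) :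
    IsOdotDer (fun x => if x = 1 then u else x) := by
  intro x y
  by_cases hx : x = 1 <;> by_cases hy : y = 1
  · simp [hx, hy, od_one, one_od]
  · simp only [hx, one_od, od_one, if_pos rfl, if_neg hy, ite_true]
    rw [max_eq_right (od_le_right u y)]
  · simp only [hy, one_od, od_one, if_pos rfl, if_neg hx, ite_true]
    rw [max_eq_left (od_le_left x u)]
  · have hxy : od x y ≠ 1 := by
      intro h
      have h' : max 0 (x.1 + y.1 - 1) = 1 := congrArg Subtype.val h
      have hx1 : x.1 < 1 := lt_of_le_of_ne x.2.2 (fun h => hx (Subtype.ext h))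
      have hy1 : y.1 < 1 := lt_of_le_of_ne y.2.2 (fun h => hy (Subtype.ext h))
      have : max 0 (x.1 + y.1 - 1) < 1 := max_lt one_pos (by linarith)
      linarith [h'.ge.trans_lt this]
    simp only [if_neg hx, if_neg hy, if_neg hxy, max_self]
end
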